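/- arXiv:2501.16067 — 7 statements merged into one kernel-verified Lean document; each statement's English description precedes it below -/
import Mathlib

section
/- There exists an injection from ℕ into Baire space ℕ → ℕ, but (assuming the continuity principle for all functions from Baire space to ℕ) there is no injection from Baire space into ℕ; hence Baire space has strictly larger cardinality than ℕ under CP. -/
theorem stmt_1
    (hCP : ∀ f : (ℕ → ℕ) → ℕ, ∀ α : ℕ → ℕ, ∃ n : ℕ,
      ∀ β : ℕ → ℕ, (∀ k < n, β k = α k) → f β = f α) :
    (∃ g : ℕ → (ℕ → ℕ), Function.Injective g) ∧
      ¬ ∃ f : (ℕ → ℕ) → ℕ, Function.Injective f := by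
  constructor
  · exact ⟨fun n _ => n, fun a b h => congrFun h 0⟩
  · rintro ⟨f, hf⟩
    obtain ⟨n, hn⟩ := hCP f (fun _ => 0)
    set β : ℕ → ℕ := fun k => if k < n then 0 else 1 with hβ
    have h1 : f β = f (fun _ => 0) := hn β (fun k hk => by simp [hβ, hk])
    have h2 := hf h1
    have := congrFun h2 n
    simp [hβ] at this
end

section
/- Define the coincidence relation on admissible RNG sequences: a R b iff for all n and m, the intervals [a(n)/2ⁿ, (a(n)+2)/2ⁿ] and [b(m)/2ᵐ, (b(m)+2)/2ᵐ] have nonempty intersection. Then R is an equivalence relation, and a R b holds if and only if a and b generate the same real number (the same unique point in the intersection of their intervals). -/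
def RNGAdm (a : ℕ → ℤ) : Prop :=
  ∀ n, a (n + 1) = 2 * a n ∨ a (n + 1) = 2 * a n + 1 ∨ a (n + 1) = 2 * a n + 2

def RNGInt (a : ℕ → ℤ) (n : ℕ) : Set ℝ :=
  Set.Icc ((a n : ℝ) / 2 ^ n) ((a n + 2 : ℝ) / 2 ^ n)

def RNGCoin (a b : ℕ → ℤ) : Prop :=
  ∀ n m : ℕ, (RNGInt a n ∩ RNGInt b m).Nonempty

lemma rng_bounds {a : ℕ → ℤ} (ha : RNGAdm a) (n : ℕ) :
    2 * a n ≤ a (n + 1) ∧ a (n + 1) ≤ 2 * a n + 2 := by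
  rcases ha n with h | h | h <;> omega

lemma rng_nested {a : ℕ → ℤ} (ha : RNGAdm a) (n : ℕ) :
    RNGInt a (n + 1) ⊆ RNGInt a n := by
  obtain ⟨h1, h2⟩ := rng_bounds ha n
  apply Set.Icc_subset_Icc
  · have e : ((a n : ℝ)) / 2 ^ n = (2 * (a n : ℝ)) / 2 ^ (n + 1) := by
      rw [pow_succ]; ring
    rw [e]
    gcongr
    exact_mod_cast h1
  · have e : ((a n : ℝ) + 2) / 2 ^ n = (2 * (a n : ℝ) + 4) / 2 ^ (n + 1) := by
      rw [pow_succ]; ring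
    rw [e]
    gcongr ?x / _
    have : (a (n + 1) : ℝ) ≤ 2 * (a n : ℝ) + 2 := by exact_mod_cast h2
    linarith

lemma rng_anti {a : ℕ → ℤ} (ha : RNGAdm a) {n m : ℕ} (h : n ≤ m) :
    RNGInt a m ⊆ RNGInt a n := by
  induction m with
  | zero => simp_all
  | succ k ih =>
    rcases Nat.lt_or_ge n (k + 1) with hlt | hge
    · exact (rng_nested ha k).trans (ih (Nat.lt_succ_iff.mp hlt))
    · have : n = k + 1 := le_antisymm h hge
      subst this; exact fun x hx => hx

lemma rng_lower_mem {a : ℕ → ℤ} (n : ℕ) : (a n : ℝ) / 2 ^ n ∈ RNGInt a n := by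
  refine ⟨le_refl _, ?_⟩
  gcongr
  linarith

lemma rng_mono {a : ℕ → ℤ} (ha : RNGAdm a) :
    Monotone (fun n => (a n : ℝ) / 2 ^ n) := by
  apply monotone_nat_of_le_succ
  intro n
  obtain ⟨h1, _⟩ := rng_bounds ha n
  have e : ((a n : ℝ)) / 2 ^ n = (2 * (a n : ℝ)) / 2 ^ (n + 1) := by
    rw [pow_succ]; ring
  rw [e]
  gcongr
  exact_mod_cast h1

lemma rng_exists {a : ℕ → ℤ} (ha : RNGAdm a) : ∃ x : ℝ, ∀ n, x ∈ RNGInt a n := by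
  have key : ∀ m n : ℕ, (a m : ℝ) / 2 ^ m ≤ (a n + 2 : ℝ) / 2 ^ n := by
    intro m n
    rcases le_total m n with h | h
    · exact (rng_mono ha h).trans (rng_lower_mem n).2
    · exact (rng_anti ha h (rng_lower_mem m)).2
  refine ⟨⨆ n, (a n : ℝ) / 2 ^ n, fun n => ?_⟩
  have hbdd : BddAbove (Set.range fun n => (a n : ℝ) / 2 ^ n) :=
    ⟨(a n + 2 : ℝ) / 2 ^ n, by rintro x ⟨m, rfl⟩; exact key m n⟩
  exact ⟨le_ciSup hbdd n, ciSup_le fun m => key m n⟩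

lemma rng_coin_of_eq {a b : ℕ → ℤ} {x y : ℝ}
    (hx : ∀ n, x ∈ RNGInt a n) (hy : ∀ n, y ∈ RNGInt b n) (h : x = y) :
    RNGCoin a b := fun n m => ⟨x, hx n, h ▸ hy m⟩

lemma rng_eq_of_coin {a b : ℕ → ℤ} {x y : ℝ}
    (hx : ∀ n, x ∈ RNGInt a n) (hy : ∀ n, y ∈ RNGInt b n) (h : RNGCoin a b) :
    x = y := by
  have key : ∀ n : ℕ, |x - y| ≤ 4 / 2 ^ n := by
    intro n
    obtain ⟨z, hza, hzb⟩ := h n n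
    have hxn := hx n; have hyn := hy n
    have w : (a n + 2 : ℝ) / 2 ^ n - (a n : ℝ) / 2 ^ n = 2 / 2 ^ n := by
      rw [div_sub_div_same]; ring_nf
    have w2 : (b n + 2 : ℝ) / 2 ^ n - (b n : ℝ) / 2 ^ n = 2 / 2 ^ n := by
      rw [div_sub_div_same]; ring_nf
    have h1 : |x - z| ≤ 2 / 2 ^ n := by
      rw [abs_sub_le_iff]
      constructor <;> [linarith [hxn.1, hxn.2, hza.1, hza.2, w];
        linarith [hxn.1, hxn.2, hza.1, hza.2, w]]
    have h2 : |z - y| ≤ 2 / 2 ^ n := by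
      rw [abs_sub_le_iff]
      constructor <;> [linarith [hyn.1, hyn.2, hzb.1, hzb.2, w2];
        linarith [hyn.1, hyn.2, hzb.1, hzb.2, w2]]
    calc |x - y| ≤ |x - z| + |z - y| := abs_sub_le x z y
    _ ≤ 2 / 2 ^ n + 2 / 2 ^ n := add_le_add h1 h2
    _ = 4 / 2 ^ n := by ring
  have htend : Filter.Tendsto (fun n : ℕ => (4 : ℝ) / 2 ^ n) Filter.atTop (nhds 0) := by
    apply Filter.Tendsto.div_atTop tendsto_const_nhds
    exact tendsto_pow_atTop_atTop_of_one_lt (by norm_num)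
  have : |x - y| ≤ 0 := ge_of_tendsto' htend key
  have := abs_nonneg (x - y)
  have : |x - y| = 0 := le_antisymm ‹|x - y| ≤ 0› ‹0 ≤ |x - y|›
  linarith [abs_eq_zero.mp this, sub_eq_zero.mp (abs_eq_zero.mp this)]

theorem stmt_5 :
    (∀ a, RNGAdm a → RNGCoin a a) ∧
    (∀ a b, RNGAdm a → RNGAdm b → RNGCoin a b → RNGCoin b a) ∧
    (∀ a b c, RNGAdm a → RNGAdm b → RNGAdm c → RNGCoin a b → RNGCoin b c → RNGCoin a c) ∧
    (∀ a b (x y : ℝ), RNGAdm a → RNGAdm b →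
      (∀ n, x ∈ RNGInt a n) → (∀ n, y ∈ RNGInt b n) →
      (RNGCoin a b ↔ x = y)) := by
  refine ⟨?_, ?_, ?_, ?_⟩
  · intro a ha n m
    rcases le_total n m with h | h
    · exact ⟨(a m : ℝ) / 2 ^ m, rng_anti ha h (rng_lower_mem m), rng_lower_mem m⟩
    · exact ⟨(a n : ℝ) / 2 ^ n, rng_lower_mem n, rng_anti ha h (rng_lower_mem n)⟩
  · intro a b _ _ h n m
    obtain ⟨z, h1, h2⟩ := h m n
    exact ⟨z, h2, h1⟩
  · intro a b c ha hb hc hab hbc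
    obtain ⟨x, hx⟩ := rng_exists ha
    obtain ⟨y, hy⟩ := rng_exists hb
    obtain ⟨z, hz⟩ := rng_exists hc
    have e1 := rng_eq_of_coin hx hy hab
    have e2 := rng_eq_of_coin hy hz hbc
    exact rng_coin_of_eq hx hz (e1.trans e2)
  · intro a b x y ha hb hx hy
    exact ⟨rng_eq_of_coin hx hy, rng_coin_of_eq hx hy⟩
end

section
/- Given any admissible RNG sequence a and any n, the sequence a' defined by a'(k) = a(k) for k ≥ n and, by downward recursion, a'(k) = (a'(k+1) − 1)/2 rounded down for k < n (precisely a'(k) chosen so that 2a'(k) ≤ a'(k+1) ≤ 2a'(k)+2) yields an admissible sequence generating the same real number as a. -/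
open Filter

/-!
Beyond index `n` the two sequences agree, so from then on both reals lie in the same interval
`[a k / 2 ^ k, (a k + 2) / 2 ^ k]`, whose length `2 / 2 ^ k` tends to zero.
-/

theorem eq_of_eventually_dist_le_div_two_pow {X : Type*} [MetricSpace X]
    {x y : X} {C : ℝ} (h : ∀ᶠ k : ℕ in atTop, dist x y ≤ C / 2 ^ k) : x = y := by
  have hlim : Tendsto (fun k : ℕ => C / 2 ^ k) atTop (nhds 0) :=
    tendsto_const_nhds.div_atTop (tendsto_pow_atTop_atTop_of_one_lt one_lt_two)
  exact dist_le_zero.mp (ge_of_tendsto hlim h)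

theorem dist_le_of_mem_Icc_div_two_pow {x y m : ℝ} {k : ℕ}
    (hx : x ∈ Set.Icc (m / 2 ^ k) ((m + 2) / 2 ^ k))
    (hy : y ∈ Set.Icc (m / 2 ^ k) ((m + 2) / 2 ^ k)) : dist x y ≤ 2 / 2 ^ k := by
  calc dist x y ≤ (m + 2) / 2 ^ k - m / 2 ^ k := Real.dist_le_of_mem_Icc hx hy
    _ = 2 / 2 ^ k := by ring

theorem stmt_6 (a a' : ℕ → ℤ) (n : ℕ)
    (hadm : ∀ k, a (k + 1) = 2 * a k ∨ a (k + 1) = 2 * a k + 1 ∨ a (k + 1) = 2 * a k + 2)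
    (hge : ∀ k, n ≤ k → a' k = a k)
    (hlt : ∀ k, k < n → 2 * a' k ≤ a' (k + 1) ∧ a' (k + 1) ≤ 2 * a' k + 2) :
    (∀ k, a' (k + 1) = 2 * a' k ∨ a' (k + 1) = 2 * a' k + 1 ∨ a' (k + 1) = 2 * a' k + 2) ∧
    (∀ x y : ℝ,
      (∀ k : ℕ, x ∈ Set.Icc ((a k : ℝ) / 2 ^ k) ((a k + 2 : ℝ) / 2 ^ k)) →
      (∀ k : ℕ, y ∈ Set.Icc ((a' k : ℝ) / 2 ^ k) ((a' k + 2 : ℝ) / 2 ^ k)) →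
      x = y) := by
  refine ⟨fun k => ?_, fun x y hx hy => ?_⟩
  · rcases lt_or_ge k n with hk | hk
    · have := hlt k hk
      omega
    · rw [hge k hk, hge (k + 1) (by omega)]
      exact hadm k
  · refine eq_of_eventually_dist_le_div_two_pow (C := 2) ?_
    filter_upwards [eventually_ge_atTop n] with k hk
    have hyk := hy k
    rw [hge k hk] at hyk
    exact dist_le_of_mem_Icc_div_two_pow (hx k) hyk
end

section
/- (Intuitionistically valid, no classical logic) Let φ be a proposition and define a relation on a two-element type {a, b} by: a ≻ b iff ¬¬φ, and a ≺ b iff ¬φ (and x ≺ x never, with b ≺ a iff a ≻ b). Then this relation satisfies the five virtual order axioms; in particular axiom 3 holds: if both b ≺ a and a = b are impossible, then a ≺ b. -/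
theorem stmt_7 (φ : Prop)
    (lt : Bool → Bool → Prop)
    (hlt : ∀ x y, lt x y ↔ ((x = true ∧ y = false ∧ ¬φ) ∨ (x = false ∧ y = true ∧ ¬¬φ))) :
    (∀ x y : Bool, ¬(x = y ∧ lt x y) ∧ ¬(x = y ∧ lt y x) ∧ ¬(lt x y ∧ lt y x)) ∧
    (∀ x y u v : Bool, x = u → y = v → lt x y → lt u v) ∧
    (∀ x y : Bool, ¬ lt y x → x ≠ y → lt x y) ∧
    (∀ x y : Bool, ¬ lt y x → ¬ lt x y → x = y) ∧
    (∀ x y z : Bool, lt x y → lt y z → lt x z) := by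
  have key : ∀ x y, lt x y → ((x = true ∧ y = false ∧ ¬φ) ∨ (x = false ∧ y = true ∧ ¬¬φ)) :=
    fun x y => (hlt x y).mp
  have irr : ∀ x, ¬ lt x x := by
    intro x h
    rcases key x x h with ⟨h1, h2, _⟩ | ⟨h1, h2, _⟩ <;> rw [h1] at h2 <;> exact Bool.noConfusion h2
  have asym : ∀ x y, lt x y → lt y x → False := by
    intro x y h h'
    rcases key x y h with ⟨hx, hy, hp⟩ | ⟨hx, hy, hp⟩ <;>
      rcases key y x h' with ⟨hy', hx', hq⟩ | ⟨hy', hx', hq⟩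
    · rw [hx'] at hx; exact Bool.noConfusion hx
    · exact hq hp
    · exact hp hq
    · rw [hx'] at hx; exact Bool.noConfusion hx
  refine ⟨?_, ?_, ?_, ?_, ?_⟩
  · intro x y
    refine ⟨?_, ?_, fun ⟨h, h'⟩ => asym x y h h'⟩
    · rintro ⟨rfl, h⟩; exact irr x h
    · rintro ⟨rfl, h⟩; exact irr x h
  · rintro x y u v rfl rfl h; exact h
  · intro x y h hne
    cases x <;> cases y
    · exact absurd rfl hne
    · refine (hlt false true).mpr (Or.inr ⟨rfl, rfl, ?_⟩)
      intro hp
      exact h ((hlt true false).mpr (Or.inl ⟨rfl, rfl, hp⟩))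
    · refine (hlt true false).mpr (Or.inl ⟨rfl, rfl, ?_⟩)
      intro hp
      exact h ((hlt false true).mpr (Or.inr ⟨rfl, rfl, fun hn => hn hp⟩))
    · exact absurd rfl hne
  · intro x y h h'
    cases x <;> cases y
    · rfl
    · exfalso
      have hnn : ¬¬φ := fun hnp => h ((hlt true false).mpr (Or.inl ⟨rfl, rfl, hnp⟩))
      exact hnn (fun hp => h' ((hlt false true).mpr (Or.inr ⟨rfl, rfl, fun k => k hp⟩)))
    · exfalso
      have hnn : ¬¬φ := fun hnp => h' ((hlt true false).mpr (Or.inl ⟨rfl, rfl, hnp⟩))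
      exact hnn (fun hp => h ((hlt false true).mpr (Or.inr ⟨rfl, rfl, fun k => k hp⟩)))
    · rfl
  · intro x y z h h'
    exfalso
    rcases key x y h with ⟨_, hy, hp⟩ | ⟨_, hy, hp⟩ <;>
      rcases key y z h' with ⟨hy', _, hq⟩ | ⟨hy', _, hq⟩
    · rw [hy'] at hy; exact Bool.noConfusion hy
    · exact hq hp
    · exact hp hq
    · rw [hy'] at hy; exact Bool.noConfusion hy
end

section
/- (Intuitionistically valid) Kripke's Schema is derivable from the CS axioms: suppose B : ℕ → Prop → Prop satisfies CS4 (∀n φ, B n φ ∨ ¬B n φ) and IC3 (∀φ, φ → ∃n, B n φ) and CS5 (∀φ, (∃n, B n φ) → φ). Then for every proposition φ there exists a : ℕ → ℕ with (∀n, a n = 0 ∨ a n = 1) and ((∃n, a n ≠ 0) ↔ φ). -/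
theorem stmt_14 (B : ℕ → Prop → Prop)
    (hCS4 : ∀ (n : ℕ) (φ : Prop), B n φ ∨ ¬ B n φ)
    (hIC3 : ∀ φ : Prop, φ → ∃ n, B n φ)
    (hCS5 : ∀ φ : Prop, (∃ n, B n φ) → φ) :
    ∀ φ : Prop, ∃ a : ℕ → ℕ,
      (∀ n, a n = 0 ∨ a n = 1) ∧ ((∃ n, a n ≠ 0) ↔ φ) := by
  intro φ
  classical
  refine ⟨fun n => if B n φ then 1 else 0, fun n => ?_, ?_⟩
  · rcases hCS4 n φ with h | h
    · exact Or.inr (if_pos h)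
    · exact Or.inl (if_neg h)
  · constructor
    · rintro ⟨n, hn⟩
      rcases hCS4 n φ with h | h
      · exact hCS5 φ ⟨n, h⟩
      · exact absurd (if_neg h) hn
    · intro hφ
      obtain ⟨n, hn⟩ := hIC3 φ hφ
      exact ⟨n, by simp [if_pos hn]⟩
end

section
/- (Intuitionistically valid) Suppose B satisfies MD and IC2, and let α, Rr, Rl be propositions with Rr ↔ ∃n, B n α and Rl ↔ ∃n, B n (¬α). Then: (i) ¬(Rr ∧ Rl); (ii) ¬Rr ↔ ¬α; (iii) ¬Rl ↔ ¬¬α; (iv) ¬(¬Rr ∧ ¬Rl). -/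
theorem stmt_15 (B : ℕ → Prop → Prop)
    (hMD : ∀ φ : Prop, ¬(∃ n, B n φ) → ¬φ)
    (hIC2 : ∀ φ : Prop, ¬φ → ¬(∃ n, B n φ))
    (α Rr Rl : Prop)
    (hRr : Rr ↔ ∃ n, B n α) (hRl : Rl ↔ ∃ n, B n ¬α) :
    ¬(Rr ∧ Rl) ∧ (¬Rr ↔ ¬α) ∧ (¬Rl ↔ ¬¬α) ∧ ¬(¬Rr ∧ ¬Rl) := by
  have h2 : ¬Rr ↔ ¬α :=
    ⟨fun h => hMD α (fun e => h (hRr.mpr e)),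
     fun h hr => hIC2 α h (hRr.mp hr)⟩
  have h3 : ¬Rl ↔ ¬¬α :=
    ⟨fun h => hMD (¬α) (fun e => h (hRl.mpr e)),
     fun h hl => hIC2 (¬α) h (hRl.mp hl)⟩
  have h1 : ¬(Rr ∧ Rl) := fun ⟨hr, hl⟩ =>
    h3.mpr (fun na => h2.mpr na hr) hl
  exact ⟨h1, h2, h3, fun ⟨hr, hl⟩ => h3.mp hl (h2.mp hr)⟩
end

section
/- (Intuitionistically valid) Suppose B satisfies MD and IC2, and R ↔ ∃n, B n α. Assuming ¬¬α, ¬¬R holds; and if moreover (∃n, B n α) → α is assumed (CS5 for α), then ¬¬R → R implies ¬¬α → α. -/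
theorem stmt_18 (B : ℕ → Prop → Prop)
    (hMD : ∀ φ : Prop, ¬(∃ n, B n φ) → ¬φ)
    (hIC2 : ∀ φ : Prop, ¬φ → ¬(∃ n, B n φ))
    (α R : Prop) (hR : R ↔ ∃ n, B n α) :
    (¬¬α → ¬¬R) ∧ (((∃ n, B n α) → α) → (¬¬R → R) → (¬¬α → α)) := by
  constructor
  · intro hnna hnR
    exact hnna fun ha => hnR (hR.mpr (by
      by_contra h
      exact hMD α h ha))
  · intro hCS hdn hnna
    exact hCS (hR.mp (hdn fun hnR => hnna fun ha => hnR (hR.mpr (by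
      by_contra h
      exact hMD α h ha))))
end
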